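/- Let N be an odd prime. Then the number of orbits of the action of (ℤ/Nℤ)ˣ on the 2-element subsets of ℤ/Nℤ equals (N+1)/2. -/

import Mathlib

open scoped BigOperators

/-- The orbit equivalence relation, on `d`-element subsets of `ℤ/Nℤ`, induced by the
multiplication action of `(ℤ/Nℤ)ˣ`: `u·S = {u·s : s ∈ S}`. -/
def subsetOrbitRel (N d : ℕ) (S S' : {s : Finset (ZMod N) // s.card = d}) : Prop :=
  ∃ u : (ZMod N)ˣ, Finset.image (fun x => (u : ZMod N) * x) S.1 = S'.1

/-!
Burnside's lemma: for a finite field `F` with `q` elements, the number of orbits of `Fˣ` on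
2-subsets, times `q - 1`, is `∑ u, |Fix u|`. A unit fixing `{a, b}` either fixes both points,
and then it is `1`, or swaps them, and then `u² = 1`, so `u = -1` and `b = -a`. Thus `Fix 1`
has `q(q-1)/2` elements, `Fix (-1)` consists of the `(q-1)/2` pairs `{a, -a}`, and every other
unit fixes nothing, which leaves `(q + 1)/2` orbits when `q` is odd.
-/

open MulAction Finset
open scoped Pointwise

theorem Set.powersetCard.mem_fixedBy_iff {G α : Type*} [Group G] [MulAction G α]
    [DecidableEq α] {n : ℕ} {g : G} {s : Set.powersetCard α n} :
    s ∈ fixedBy (Set.powersetCard α n) g ↔ g • (s : Finset α) = s := by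
  rw [mem_fixedBy, Subtype.ext_iff, Set.powersetCard.coe_smul]

section CharNeTwo

variable {R : Type*} [Ring R]

theorem Units.neg_one_ne_one_of_char_ne_two [Nontrivial R] (hR : ringChar R ≠ 2) :
    (-1 : Rˣ) ≠ 1 := fun h =>
  Ring.neg_one_ne_one_of_char_ne_two hR (by simpa using congrArg Units.val h)

theorem Units.val_ne_neg_of_char_ne_two [IsDomain R] (hR : ringChar R ≠ 2) (u : Rˣ) :
    (u : R) ≠ -u :=
  Ne.symm ((Ring.eq_self_iff_eq_zero_of_char_ne_two hR).not.2 u.ne_zero)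

end CharNeTwo

section Domain

variable {R : Type*} [CommRing R] [IsDomain R] [DecidableEq R]

theorem units_smul_pair_eq_self_iff {u : Rˣ} {a b : R} (hab : a ≠ b) :
    u • ({a, b} : Finset R) = {a, b} ↔ u = 1 ∨ (u = -1 ∧ b = -a) := by
  rw [smul_finset_insert, smul_finset_singleton, Units.smul_def, Units.smul_def,
    Units.ext_iff, Units.ext_iff, Units.val_one, Units.val_neg, Units.val_one]
  constructor
  · intro h
    have ha : (u : R) * a ∈ ({a, b} : Finset R) := h ▸ mem_insert_self _ _
    have hb : (u : R) * b ∈ ({a, b} : Finset R) := h ▸ mem_insert_of_mem (mem_singleton_self _)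
    simp only [mem_insert, mem_singleton] at ha hb
    have hu := u.isUnit
    rcases ha with ha | ha <;> rcases hb with hb | hb
    · exact absurd (hu.mul_left_cancel (ha.trans hb.symm)) hab
    · left
      by_contra hu1
      have hu1' : (u : R) - 1 ≠ 0 := sub_ne_zero.2 hu1
      have ha0 : a = 0 := (mul_eq_zero.1 (by linear_combination ha : ((u : R) - 1) * a = 0))
        |>.resolve_left hu1'
      have hb0 : b = 0 := (mul_eq_zero.1 (by linear_combination hb : ((u : R) - 1) * b = 0))
        |>.resolve_left hu1'
      exact hab (ha0.trans hb0.symm)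
    · have ha0 : a ≠ 0 := by rintro rfl; exact hab (by simpa using ha)
      have hsq : ((u : R) - 1) * ((u : R) + 1) = 0 :=
        (mul_eq_zero.1 (by linear_combination (u : R) * ha + hb :
          ((u : R) - 1) * ((u : R) + 1) * a = 0)).resolve_right ha0
      rcases mul_eq_zero.1 hsq with h1 | h1
      · exact Or.inl (sub_eq_zero.1 h1)
      · have hu1 : (u : R) = -1 := eq_neg_of_add_eq_zero_left h1
        exact Or.inr ⟨hu1, by rw [← ha, hu1, neg_one_mul]⟩
    · exact absurd (hu.mul_left_cancel (ha.trans hb.symm)) hab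
  · rintro (hu | ⟨hu, rfl⟩)
    · simp [hu]
    · simp [hu, pair_comm]

theorem eq_one_or_eq_neg_one_of_mem_fixedBy_powersetCard_two {u : Rˣ}
    {s : Set.powersetCard R 2} (hs : s ∈ fixedBy (Set.powersetCard R 2) u) :
    u = 1 ∨ u = -1 := by
  obtain ⟨a, b, hab, hs'⟩ := card_eq_two.1 s.2
  rw [Set.powersetCard.mem_fixedBy_iff, hs', units_smul_pair_eq_self_iff hab] at hs
  exact hs.imp_right And.left

def plusMinusPair (hR : ringChar R ≠ 2) (u : Rˣ) : Set.powersetCard R 2 :=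
  Set.powersetCard.ofCard (s := {(u : R), -(u : R)})
    (card_pair (u.val_ne_neg_of_char_ne_two hR))

theorem plusMinusPair_eq_plusMinusPair_iff (hR : ringChar R ≠ 2) {u v : Rˣ} :
    plusMinusPair hR u = plusMinusPair hR v ↔ u = v ∨ u = -v := by
  rw [Subtype.ext_iff, Units.ext_iff, Units.ext_iff, Units.val_neg]
  constructor
  · intro h
    have hu : (u : R) ∈ (plusMinusPair hR v : Finset R) := h ▸ mem_insert_self _ _
    simpa only [plusMinusPair, Set.powersetCard.val_ofCard, mem_insert, mem_singleton] using hu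
  · rintro (h | h)
    · simp [plusMinusPair, h]
    · simp [plusMinusPair, h, pair_comm]

theorem two_mul_card_range_plusMinusPair [Fintype R] (hR : ringChar R ≠ 2) :
    2 * Nat.card (Set.range (plusMinusPair hR)) = Nat.card Rˣ := by
  have hfiber (u : Rˣ) : #{v | plusMinusPair hR v = plusMinusPair hR u} = 2 := by
    have hu : u ≠ -u := fun h => u.val_ne_neg_of_char_ne_two hR (congrArg Units.val h)
    calc #{v | plusMinusPair hR v = plusMinusPair hR u} = #{u, -u} := by
          congr 1; ext v; simp [plusMinusPair_eq_plusMinusPair_iff]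
      _ = 2 := card_pair hu
  rw [Nat.card_eq_card_toFinset, Set.toFinset_range, Nat.card_eq_fintype_card, ← card_univ,
    card_eq_sum_card_image (plusMinusPair hR), sum_const_nat (m := 2), mul_comm]
  exact forall_mem_image.2 fun u _ => hfiber u

end Domain

section Field

variable {F : Type*} [Field F] [DecidableEq F]

theorem fixedBy_neg_one_powersetCard_two (hF : ringChar F ≠ 2) :
    fixedBy (Set.powersetCard F 2) (-1 : Fˣ) = Set.range (plusMinusPair hF) := by
  ext s
  rw [Set.powersetCard.mem_fixedBy_iff, Set.mem_range]
  constructor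
  · intro hs
    obtain ⟨a, b, hab, hs'⟩ := card_eq_two.1 s.2
    rw [hs', units_smul_pair_eq_self_iff hab] at hs
    have hb : b = -a := (hs.resolve_left (Units.neg_one_ne_one_of_char_ne_two hF)).2
    have ha : a ≠ 0 := by rintro rfl; exact hab (by simp [hb])
    exact ⟨Units.mk0 a ha, Subtype.ext (by simp [plusMinusPair, hs', hb])⟩
  · rintro ⟨v, rfl⟩
    exact (units_smul_pair_eq_self_iff (v.val_ne_neg_of_char_ne_two hF)).2 (Or.inr ⟨rfl, rfl⟩)

theorem two_mul_card_orbits_powersetCard_two [Fintype F] (hF : ringChar F ≠ 2) :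
    2 * Nat.card (orbitRel.Quotient Fˣ (Set.powersetCard F 2)) = Fintype.card F + 1 := by
  classical
  set q := Fintype.card F
  have burnside : ∑ u : Fˣ, Nat.card (fixedBy (Set.powersetCard F 2) u)
      = Nat.card (orbitRel.Quotient Fˣ (Set.powersetCard F 2)) * (q - 1) := by
    simpa only [Nat.card_eq_fintype_card, Fintype.card_units] using
      sum_card_fixedBy_eq_card_orbits_mul_card_group Fˣ (Set.powersetCard F 2)
  have hsum : ∑ u : Fˣ, Nat.card (fixedBy (Set.powersetCard F 2) u)
      = Nat.card (fixedBy (Set.powersetCard F 2) (1 : Fˣ))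
        + Nat.card (fixedBy (Set.powersetCard F 2) (-1 : Fˣ)) :=
    sum_eq_add 1 (-1) (Units.neg_one_ne_one_of_char_ne_two hF).symm
      (fun u _ hu => Nat.card_eq_zero.2 <| Or.inl
        ⟨fun s => (eq_one_or_eq_neg_one_of_mem_fixedBy_powersetCard_two s.2).elim hu.1 hu.2⟩)
      (by simp) (by simp)
  have hone : 2 * Nat.card (fixedBy (Set.powersetCard F 2) (1 : Fˣ)) = q * (q - 1) := by
    rw [fixedBy_one_eq_univ, Nat.card_univ, Set.powersetCard.card, Nat.card_eq_fintype_card,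
      Nat.choose_two_right, Nat.two_mul_div_two_of_even (Nat.even_mul_pred_self q)]
  have hneg : 2 * Nat.card (fixedBy (Set.powersetCard F 2) (-1 : Fˣ)) = q - 1 := by
    rw [fixedBy_neg_one_powersetCard_two hF, two_mul_card_range_plusMinusPair,
      Nat.card_eq_fintype_card, Fintype.card_units]
  refine Nat.eq_of_mul_eq_mul_right (Nat.sub_pos_of_lt (Fintype.one_lt_card (α := F))) ?_
  rw [mul_assoc, ← burnside, hsum, mul_add, hone, hneg, add_mul, one_mul]

end Field

theorem subsetOrbitRel_iff_orbitRel {N d : ℕ} (S S' : {s : Finset (ZMod N) // s.card = d}) :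
    subsetOrbitRel N d S S' ↔
      orbitRel (ZMod N)ˣ _ (Set.powersetCard.ofCard S.2) (Set.powersetCard.ofCard S'.2) := by
  rw [Setoid.comm', orbitRel_apply, mem_orbit_iff]
  refine exists_congr fun u => ?_
  rw [Subtype.ext_iff, Set.powersetCard.coe_smul, smul_finset_def]
  rfl

theorem card_quot_subsetOrbitRel (N d : ℕ) :
    Nat.card (Quot (subsetOrbitRel N d))
      = Nat.card (orbitRel.Quotient (ZMod N)ˣ (Set.powersetCard (ZMod N) d)) :=
  Nat.card_congr (Quot.congr (Equiv.subtypeEquivRight fun _ => Set.powersetCard.mem_iff.symm)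
    subsetOrbitRel_iff_orbitRel)

/-- For an odd prime `N`, the number of orbits of the action of `(ℤ/Nℤ)ˣ` on the
`2`-element subsets of `ℤ/Nℤ` equals `(N+1)/2`. -/
theorem card_two_subset_orbits (N : ℕ) (hN : N.Prime) (hodd : Odd N) :
    (Nat.card (Quot (subsetOrbitRel N 2)) : ℚ) = ((N : ℚ) + 1) / 2 := by
  have : Fact N.Prime := ⟨hN⟩
  have hchar : ringChar (ZMod N) ≠ 2 := by
    rw [ZMod.ringChar_zmod_n]
    rintro rfl
    exact Nat.not_odd_iff_even.2 even_two hodd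
  have key := two_mul_card_orbits_powersetCard_two hchar
  rw [ZMod.card, ← card_quot_subsetOrbitRel] at key
  rw [eq_div_iff two_ne_zero, mul_comm]
  exact_mod_cast key
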